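/- arXiv:2605.03692 — 5 statements merged into one kernel-verified Lean document; each statement's English description precedes it below -/
import Mathlib

section
/- For 0 ≤ r < 1, the supremum of |(1 - z)/(1 - r z)| over the open unit disc equals 2/(1 + r). -/
open Complex Metric

/-! The bound comes from the identity
`4 ‖1 - r z‖² - (1 + r)² ‖1 - z‖² = 2 (1 - r²) (1 - ‖z‖²) + (1 - r)² ‖1 + z‖²`,
whose right-hand side is nonnegative for `|r| ≤ 1` and `‖z‖ ≤ 1`. It is attained in the limit
`z → -1`, where the function is continuous with value `2 / (1 + r)`. -/

theorem four_mul_sq_norm_one_sub_mul_sub (r : ℝ) (z : ℂ) :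
    4 * ‖1 - (r : ℂ) * z‖ ^ 2 - (1 + r) ^ 2 * ‖1 - z‖ ^ 2
      = 2 * (1 - r ^ 2) * (1 - ‖z‖ ^ 2) + (1 - r) ^ 2 * ‖1 + z‖ ^ 2 := by
  simp only [Complex.sq_norm, Complex.normSq_apply, sub_re, sub_im, add_re, add_im, mul_re,
    mul_im, one_re, one_im, ofReal_re, ofReal_im]
  ring

theorem one_add_mul_norm_one_sub_le {r : ℝ} (hr : |r| ≤ 1) {z : ℂ} (hz : ‖z‖ ≤ 1) :
    (1 + r) * ‖1 - z‖ ≤ 2 * ‖1 - (r : ℂ) * z‖ := by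
  obtain ⟨hr_ge, -⟩ := abs_le.mp hr
  have hr2 : r ^ 2 ≤ 1 := (sq_le_one_iff_abs_le_one r).mpr hr
  have hz2 : ‖z‖ ^ 2 ≤ 1 := pow_le_one₀ (norm_nonneg z) hz
  have hsq : ((1 + r) * ‖1 - z‖) ^ 2 ≤ (2 * ‖1 - (r : ℂ) * z‖) ^ 2 := by
    have := four_mul_sq_norm_one_sub_mul_sub r z
    nlinarith [mul_nonneg (sub_nonneg.2 hr2) (sub_nonneg.2 hz2), sq_nonneg (1 - r),
      sq_nonneg ‖1 + z‖]
  exact (pow_le_pow_iff_left₀ (mul_nonneg (by linarith) (norm_nonneg _)) (by positivity)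
    two_ne_zero).mp hsq

theorem norm_one_sub_div_one_sub_mul_le {r : ℝ} (hr0 : -1 < r) (hr1 : r ≤ 1) {z : ℂ}
    (hz : ‖z‖ ≤ 1) : ‖(1 - z) / (1 - (r : ℂ) * z)‖ ≤ 2 / (1 + r) := by
  have hr : 0 < 1 + r := by linarith
  rw [norm_div]
  refine div_le_of_le_mul₀ (norm_nonneg _) (by positivity) ?_
  rw [div_mul_eq_mul_div, le_div_iff₀ hr, mul_comm]
  exact one_add_mul_norm_one_sub_le (abs_le.mpr ⟨hr0.le, hr1⟩) hz

/-- For `0 ≤ r < 1`, the supremum of `|(1 - z)/(1 - r z)|` over the open unit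
disc equals `2/(1 + r)`. -/
theorem stmt1 (r : ℝ) (hr0 : 0 ≤ r) (hr1 : r < 1) :
    sSup ((fun z : ℂ => ‖(1 - z) / (1 - (r : ℂ) * z)‖) '' ball (0:ℂ) 1)
      = 2 / (1 + r) := by
  set f : ℂ → ℝ := fun z => ‖(1 - z) / (1 - (r : ℂ) * z)‖
  have hr : (0 : ℝ) < 1 + r := by linarith
  have hf_neg_one : f (-1) = 2 / (1 + r) := by
    have : (1 - (-1 : ℂ)) / (1 - (r : ℂ) * -1) = ((2 / (1 + r) : ℝ) : ℂ) := by
      push_cast; ring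
    simp only [f, this, norm_real, Real.norm_of_nonneg (by positivity : (0 : ℝ) ≤ 2 / (1 + r))]
  have hf_cont : ContinuousAt f (-1) := by
    have : (1 : ℂ) - (r : ℂ) * -1 ≠ 0 := by
      rw [mul_neg_one, sub_neg_eq_add]; exact_mod_cast hr.ne'
    exact (continuousAt_const.sub continuousAt_id).div
      (continuousAt_const.sub (continuousAt_const.mul continuousAt_id)) this |>.norm
  have h_mem : (-1 : ℂ) ∈ closure (ball (0 : ℂ) 1) := by
    rw [closure_ball _ one_ne_zero]; simp
  refine (isLUB_of_mem_closure ?_ (hf_neg_one ▸ mem_closure_image hf_cont h_mem)).csSup_eq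
    ⟨f 0, Set.mem_image_of_mem f (mem_ball_self one_pos)⟩
  rintro _ ⟨z, hz, rfl⟩
  exact norm_one_sub_div_one_sub_mul_le (by linarith) hr1.le (mem_ball_zero_iff.mp hz).le
end

section
/- If a holomorphic function g on the unit disc has bounded imaginary part, |Im g(z)| ≤ A, then there exist constants B, C > 0 (depending on g(0) and A) such that |g(z)| ≤ B + C·log((1+|z|)/(1-|z|)) for all z in the disc. -/
/-!
Since `‖exp (i g)‖ = exp (-Im g)` lies in `[exp (-A), exp A]`, the Cauchy estimate for `exp (i g)` on
the disc of radius `(1 - |w|) / 2` about `w` gives `|g'(w)| ≤ 2 e^{2A} / (1 - |w|)`. Integrating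
this along the radius `[0, z]` yields `|g z - g 0| ≤ -2 e^{2A} log (1 - |z|)`, and
`-log (1 - ρ) ≤ log ((1 + ρ) / (1 - ρ))`.
-/

open Complex Metric

theorem norm_deriv_le_of_abs_im_le {g : ℂ → ℂ} {c : ℂ} {r A : ℝ} (hr : 0 < r)
    (hg : DiffContOnCl ℂ g (ball c r)) (hIm : ∀ z ∈ closedBall c r, |(g z).im| ≤ A) :
    ‖deriv g c‖ ≤ Real.exp (2 * A) / r := by
  have norm_exp_I_mul (z : ℂ) : ‖cexp (I * g z)‖ = Real.exp (-(g z).im) := by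
    simp [Complex.norm_exp, Complex.mul_re]
  have hsphere : ∀ z ∈ sphere c r, ‖cexp (I * g z)‖ ≤ Real.exp A := fun z hz => by
    rw [norm_exp_I_mul]
    exact Real.exp_le_exp.2 (by linarith [(abs_le.1 (hIm z (sphere_subset_closedBall hz))).1])
  have hd : DiffContOnCl ℂ (fun z => cexp (I * g z)) (ball c r) :=
    differentiable_exp.comp_diffContOnCl (hg.const_smul I)
  have hcauchy := norm_deriv_le_of_forall_mem_sphere_norm_le hr hd hsphere
  have hderiv : deriv (fun z => cexp (I * g z)) c = cexp (I * g c) * (I * deriv g c) :=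
    (((hg.differentiableAt isOpen_ball (mem_ball_self hr)).hasDerivAt.const_mul I).cexp).deriv
  rw [hderiv, norm_mul, norm_mul, norm_I, one_mul, norm_exp_I_mul] at hcauchy
  calc ‖deriv g c‖ = Real.exp A * (Real.exp (-A) * ‖deriv g c‖) := by
        rw [← mul_assoc, ← Real.exp_add, add_neg_cancel, Real.exp_zero, one_mul]
    _ ≤ Real.exp A * (Real.exp (-(g c).im) * ‖deriv g c‖) := by
        gcongr; linarith [(abs_le.1 (hIm c (mem_closedBall_self hr.le))).2]
    _ ≤ Real.exp A * (Real.exp A / r) := by gcongr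
    _ = Real.exp (2 * A) / r := by rw [two_mul, Real.exp_add, mul_div_assoc]

theorem norm_deriv_le_of_abs_im_le_of_mem_ball {g : ℂ → ℂ} {A : ℝ}
    (hg : DifferentiableOn ℂ g (ball 0 1)) (hIm : ∀ z ∈ ball (0 : ℂ) 1, |(g z).im| ≤ A)
    {w : ℂ} (hw : w ∈ ball (0 : ℂ) 1) :
    ‖deriv g w‖ ≤ 2 * Real.exp (2 * A) / (1 - ‖w‖) := by
  rw [mem_ball_zero_iff] at hw
  have hr : 0 < (1 - ‖w‖) / 2 := by linarith
  have hsub : closedBall w ((1 - ‖w‖) / 2) ⊆ ball 0 1 :=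
    closedBall_subset_ball' (by rw [dist_zero_right]; linarith)
  calc ‖deriv g w‖ ≤ Real.exp (2 * A) / ((1 - ‖w‖) / 2) :=
        norm_deriv_le_of_abs_im_le hr ((hg.mono hsub).diffContOnCl_ball subset_rfl)
          fun z hz => hIm z (hsub hz)
    _ = 2 * Real.exp (2 * A) / (1 - ‖w‖) := by field_simp

theorem norm_sub_le_of_norm_deriv_le_div_one_sub {g : ℂ → ℂ} {M : ℝ}
    (hg : DifferentiableOn ℂ g (ball 0 1))
    (hM : ∀ w ∈ ball (0 : ℂ) 1, ‖deriv g w‖ ≤ M / (1 - ‖w‖)) {z : ℂ} (hz : z ∈ ball (0 : ℂ) 1) :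
    ‖g z - g 0‖ ≤ -(M * Real.log (1 - ‖z‖)) := by
  rw [mem_ball_zero_iff] at hz
  set ρ := ‖z‖
  have hpos : ∀ t ∈ Set.Icc (0 : ℝ) 1, 0 < 1 - t * ρ := fun t ht => by
    nlinarith [ht.1, ht.2, norm_nonneg z]
  have hmem : ∀ t ∈ Set.Icc (0 : ℝ) 1, (t : ℂ) * z ∈ ball (0 : ℂ) 1 := fun t ht => by
    rw [mem_ball_zero_iff, norm_mul, Complex.norm_of_nonneg ht.1]
    linarith [hpos t ht]
  have hf : ∀ t ∈ Set.Icc (0 : ℝ) 1,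
      HasDerivAt (fun s : ℝ => g (s * z) - g 0) (deriv g (t * z) * z) t := fun t ht => by
    have hline : HasDerivAt (fun s : ℝ => (s : ℂ) * z) z t := by
      simpa using (hasDerivAt_id (t : ℂ)).comp_ofReal.mul_const z
    exact (((hg.differentiableAt (isOpen_ball.mem_nhds (hmem t ht))).hasDerivAt).comp t
      hline).sub_const _
  have hB : ∀ t ∈ Set.Icc (0 : ℝ) 1, HasDerivAt (fun s : ℝ => -(M * Real.log (1 - s * ρ)))
      (M / (1 - t * ρ) * ρ) t := fun t ht => by
    have := ((((hasDerivAt_id t).mul_const ρ).const_sub 1).log (hpos t ht).ne').const_mul M |>.neg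
    exact this.congr_deriv (by simp only [id]; ring)
  -- fencing against `t ↦ -M log (1 - t‖z‖)`, whose derivative dominates that of `t ↦ g (t z)`
  have key := image_norm_le_of_norm_deriv_right_le_deriv_boundary' (a := 0) (b := 1)
    (fun t ht => (hf t ht).continuousAt.continuousWithinAt)
    (fun t ht => (hf t (Set.Ico_subset_Icc_self ht)).hasDerivWithinAt)
    (by simp) (fun t ht => (hB t ht).continuousAt.continuousWithinAt)
    (fun t ht => (hB t (Set.Ico_subset_Icc_self ht)).hasDerivWithinAt)
    (fun t ht => by
      have ht' := Set.Ico_subset_Icc_self ht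
      have := hM _ (hmem t ht')
      rw [norm_mul, Complex.norm_of_nonneg ht'.1] at this
      rw [norm_mul]
      exact mul_le_mul_of_nonneg_right this (norm_nonneg z))
    (Set.right_mem_Icc.2 zero_le_one)
  simpa using key

theorem neg_log_one_sub_le_log_div {ρ : ℝ} (h0 : 0 ≤ ρ) (h1 : ρ < 1) :
    -Real.log (1 - ρ) ≤ Real.log ((1 + ρ) / (1 - ρ)) := by
  rw [Real.log_div (by linarith) (by linarith)]
  linarith [Real.log_nonneg (by linarith : (1 : ℝ) ≤ 1 + ρ)]

/-- A holomorphic function `g` on the unit disc with `|Im g| ≤ A` satisfies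
`|g(z)| ≤ B + C·log((1+|z|)/(1-|z|))` for some constants `B, C > 0`. -/
theorem stmt2 (g : ℂ → ℂ) (A : ℝ)
    (hg : DifferentiableOn ℂ g (ball (0:ℂ) 1))
    (hIm : ∀ z ∈ ball (0:ℂ) 1, |(g z).im| ≤ A) :
    ∃ B C : ℝ, 0 < B ∧ 0 < C ∧ ∀ z ∈ ball (0:ℂ) 1,
      ‖g z‖ ≤ B + C * Real.log ((1 + ‖z‖) / (1 - ‖z‖)) := by
  refine ⟨‖g 0‖ + 1, 2 * Real.exp (2 * A), by positivity, by positivity, fun z hz => ?_⟩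
  have hgrowth := norm_sub_le_of_norm_deriv_le_div_one_sub hg
    (fun w hw => norm_deriv_le_of_abs_im_le_of_mem_ball hg hIm hw) hz
  have hlog := neg_log_one_sub_le_log_div (norm_nonneg z) (mem_ball_zero_iff.1 hz)
  have hC : 0 ≤ 2 * Real.exp (2 * A) := by positivity
  calc ‖g z‖ ≤ ‖g 0‖ + ‖g z - g 0‖ := norm_le_norm_add_norm_sub' _ _
    _ ≤ ‖g 0‖ + 2 * Real.exp (2 * A) * -Real.log (1 - ‖z‖) := by linarith
    _ ≤ ‖g 0‖ + 1 + 2 * Real.exp (2 * A) * Real.log ((1 + ‖z‖) / (1 - ‖z‖)) := by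
        linarith [mul_le_mul_of_nonneg_left hlog hC]
end

section
/- If φ is a nonvanishing holomorphic function on the unit disc with bounded argument (i.e., φ = exp(g) with |Im g| bounded), then there exist constants A > 0 and c > 0 such that |φ(z)| ≥ A·(1 - |z|)^c for all z in the disc. -/
/-!
For `0 < a` with `a * M < π / 2`, the function `u = exp (a • g)` maps the disc into the right
half-plane. Composing `u` with the Cayley transform `w ↦ (w - u 0) / (w + conj (u 0))` gives a
self-map of the disc fixing `0`, so the Schwarz lemma yields `‖u z‖ ≥ ‖u 0‖ (1 - ‖z‖) / 2`.
Since `‖φ‖ = ‖u‖ ^ (1 / a)`, this is the claim with `c = 1 / a`.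
-/

open Complex Metric ComplexConjugate

namespace Complex

lemma re_exp_pos_of_abs_im_lt {w : ℂ} (h : |w.im| < Real.pi / 2) : 0 < (exp w).re := by
  rw [exp_re]
  have := Real.cos_pos_of_mem_Ioo ⟨(abs_lt.1 h).1, (abs_lt.1 h).2⟩
  positivity

lemma norm_sub_lt_norm_add_conj {w u : ℂ} (hw : 0 < w.re) (hu : 0 < u.re) :
    ‖w - u‖ < ‖w + conj u‖ := by
  have hsq : ‖w - u‖ ^ 2 < ‖w + conj u‖ ^ 2 := by
    simp only [Complex.sq_norm, normSq_apply, sub_re, sub_im, add_re, add_im, conj_re, conj_im]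
    nlinarith [mul_pos hw hu]
  exact lt_of_pow_lt_pow_left₀ 2 (norm_nonneg _) hsq

lemma norm_apply_zero_mul_le_of_re_pos {f : ℂ → ℂ} (hf : DifferentiableOn ℂ f (ball 0 1))
    (hre : ∀ z ∈ ball (0 : ℂ) 1, 0 < (f z).re) {z : ℂ} (hz : z ∈ ball (0 : ℂ) 1) :
    ‖f 0‖ * (1 - ‖z‖) ≤ (1 + ‖z‖) * ‖f z‖ := by
  have h0 : (0 : ℂ) ∈ ball (0 : ℂ) 1 := mem_ball_self one_pos
  have hden : ∀ w ∈ ball (0 : ℂ) 1, f w + conj (f 0) ≠ 0 := fun w hw =>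
    norm_pos_iff.1 ((norm_nonneg _).trans_lt (norm_sub_lt_norm_add_conj (hre w hw) (hre 0 h0)))
  set ψ : ℂ → ℂ := fun w => (f w - f 0) / (f w + conj (f 0))
  have hψ : ‖ψ z‖ ≤ ‖z‖ := by
    refine norm_le_norm_of_mapsTo_ball ?_ (fun w hw => ?_) (by simp [ψ]) (mem_ball_zero_iff.1 hz)
    · exact (hf.sub_const _).div (hf.add_const _) hden
    · rw [mem_closedBall_zero_iff, norm_div, div_le_one (norm_pos_iff.2 (hden w hw))]
      exact (norm_sub_lt_norm_add_conj (hre w hw) (hre 0 h0)).le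
  have hcayley : f z * (1 - ψ z) = f 0 + ψ z * conj (f 0) := by
    have := hden z hz
    simp only [ψ]
    field_simp
    ring
  calc ‖f 0‖ * (1 - ‖z‖) ≤ ‖f 0‖ - ‖ψ z * conj (f 0)‖ := by
        rw [norm_mul, Complex.norm_conj]; nlinarith [norm_nonneg (f 0)]
    _ ≤ ‖f 0 + ψ z * conj (f 0)‖ := norm_sub_le_norm_add _ _
    _ = ‖1 - ψ z‖ * ‖f z‖ := by rw [← hcayley, norm_mul, mul_comm]
    _ ≤ (1 + ‖z‖) * ‖f z‖ := by
        gcongr; exact (norm_sub_le _ _).trans (by rw [norm_one]; linarith)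

end Complex

theorem stmt3_general (φ g : ℂ → ℂ) (M : ℝ)
    (hg : DifferentiableOn ℂ g (ball (0:ℂ) 1))
    (hexp : ∀ z ∈ ball (0:ℂ) 1, Complex.exp (g z) = φ z)
    (hIm : ∀ z ∈ ball (0:ℂ) 1, |(g z).im| ≤ M) :
    ∃ A c : ℝ, 0 < A ∧ 0 < c ∧ ∀ z ∈ ball (0:ℂ) 1,
      A * (1 - ‖z‖) ^ c ≤ ‖φ z‖ := by
  have hM : 0 ≤ M := (abs_nonneg _).trans (hIm 0 (mem_ball_self one_pos))
  set a : ℝ := Real.pi / (2 * (M + 1))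
  have ha : 0 < a := by positivity
  have haM : a * M < Real.pi / 2 := by
    rw [div_mul_eq_mul_div, div_lt_div_iff₀ (by positivity) two_pos]
    nlinarith [Real.pi_pos]
  set u : ℂ → ℂ := fun z => exp (a * g z)
  have hu : DifferentiableOn ℂ u (ball 0 1) := (hg.const_mul _).cexp
  have hure : ∀ z ∈ ball (0 : ℂ) 1, 0 < (u z).re := fun z hz =>
    re_exp_pos_of_abs_im_lt <| by
      rw [im_ofReal_mul, abs_mul, abs_of_pos ha]
      exact (mul_le_mul_of_nonneg_left (hIm z hz) ha.le).trans_lt haM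
  have hu0 : 0 < ‖u 0‖ := norm_pos_iff.2 (exp_ne_zero _)
  refine ⟨(‖u 0‖ / 2) ^ a⁻¹, a⁻¹, by positivity, by positivity, fun z hz => ?_⟩
  have hφ : ‖φ z‖ = ‖u z‖ ^ a⁻¹ := by
    rw [← hexp z hz, norm_exp, norm_exp, re_ofReal_mul, ← Real.exp_mul]
    field_simp
  have hz1 : 0 ≤ 1 - ‖z‖ := sub_nonneg.2 (mem_ball_zero_iff.1 hz).le
  calc (‖u 0‖ / 2) ^ a⁻¹ * (1 - ‖z‖) ^ a⁻¹ = (‖u 0‖ * (1 - ‖z‖) / 2) ^ a⁻¹ := by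
        rw [← Real.mul_rpow (by positivity) hz1, div_mul_eq_mul_div]
    _ ≤ ‖u z‖ ^ a⁻¹ := by
        gcongr
        nlinarith [norm_apply_zero_mul_le_of_re_pos hu hure hz, norm_nonneg (u z)]
    _ = ‖φ z‖ := hφ.symm

/-- A nonvanishing holomorphic function `φ` on the unit disc with bounded
argument (i.e. `φ = exp g` with `|Im g| ≤ M`) satisfies `|φ(z)| ≥ A·(1-|z|)^c`. -/
theorem stmt3 (φ g : ℂ → ℂ) (M : ℝ)
    (hφ : DifferentiableOn ℂ φ (ball (0:ℂ) 1))
    (hg : DifferentiableOn ℂ g (ball (0:ℂ) 1))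
    (hnz : ∀ z ∈ ball (0:ℂ) 1, φ z ≠ 0)
    (hexp : ∀ z ∈ ball (0:ℂ) 1, Complex.exp (g z) = φ z)
    (hIm : ∀ z ∈ ball (0:ℂ) 1, |(g z).im| ≤ M) :
    ∃ A c : ℝ, 0 < A ∧ 0 < c ∧ ∀ z ∈ ball (0:ℂ) 1,
      A * (1 - ‖z‖) ^ c ≤ ‖φ z‖ :=
  stmt3_general φ g M hg hexp hIm
end

section
/- If u is a sequentially cyclic element of a unital commutative normed function algebra A, then u^n is sequentially cyclic for every positive integer n. -/
open Filter Topology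

/-- An element `φ` of a unital commutative normed function algebra `A` (realized on a set
`X` via the algebra homomorphism `ι`) is *sequentially cyclic* if there is a sequence
`u n ∈ A` with `sup_n ‖u n * φ‖ < ∞` and `u n x * φ x → 1` for every `x ∈ X`. -/
def SeqCyclic {X : Type*} {A : Type*} [NormedCommRing A] [NormedAlgebra ℂ A]
    (ι : A →ₐ[ℂ] (X → ℂ)) (φ : A) : Prop :=
  ∃ u : ℕ → A, (∃ C : ℝ, ∀ n, ‖u n * φ‖ ≤ C) ∧
    ∀ x : X, Tendsto (fun n => ι (u n * φ) x) atTop (nhds 1)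

/-- powers of a sequentially cyclic element are sequentially cyclic. -/
theorem stmt8 {X : Type*} {A : Type*} [NormedCommRing A] [NormedAlgebra ℂ A]
    (ι : A →ₐ[ℂ] (X → ℂ)) (u : A) (hu : SeqCyclic ι u) :
    ∀ n : ℕ, 0 < n → SeqCyclic ι (u ^ n) := by
  intro n hn
  obtain ⟨v, ⟨C, hC⟩, hlim⟩ := hu
  refine ⟨fun k => v k ^ n, ⟨C ^ n, fun k => ?_⟩, fun x => ?_⟩
  · calc ‖v k ^ n * u ^ n‖ = ‖(v k * u) ^ n‖ := by rw [mul_pow]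
      _ ≤ ‖v k * u‖ ^ n := norm_pow_le' _ hn
      _ ≤ C ^ n := pow_le_pow_left₀ (norm_nonneg _) (hC k) n
  · have : (fun k => ι (v k ^ n * u ^ n) x) = fun k => (ι (v k * u) x) ^ n := by
      funext k
      rw [← mul_pow, map_pow]
      rfl
    rw [this]
    have := (hlim x).pow n
    simpa using this
end

section
/- In a dual Banach space X* with separable predual, a convex subset is weak* closed if and only if it is weak* sequentially closed. Consequently, for a subalgebra A ⊆ B(H) on a separable Hilbert space H identified with a dual space, the weak* sequential closure S of a convex set C equals the weak* closure of C if and only if S is weak* sequentially closed. -/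
/-!
If `f₀` lies in the weak* closure of a convex set `K` but not in `K`, translate so that `f₀ = 0`.
Because `K` meets every dual ball in a weak* compact set and misses a small ball around `0`,
compactness applied to the balls of radius `δ + n` in turn produces a set `U ⊆ X` tending to `0`
whose polar misses `K` (Banach–Dieudonné). Then `f ↦ (f x)_{x ∈ U}` maps `K` into `c₀(U)` away
from the open unit ball; Hahn–Banach and `c₀(U)* = ℓ¹(U)` give `x₀ = ∑ aₓ • x` with
`u ≤ f x₀` on `K` for some `u > 0`, so `0` is not in the weak* closure of `K`.
Separability makes dual balls weak* metrizable, so a weak* sequentially closed set meets them in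
weak* closed sets.
-/

open Filter Metric Topology WeakDual ZeroAtInftyContinuousMap
open scoped ZeroAtInfty

theorem Convex.seqClosure {𝕜 E : Type*} [Semiring 𝕜] [PartialOrder 𝕜] [AddCommMonoid E]
    [Module 𝕜 E] [TopologicalSpace E] [ContinuousAdd E] [ContinuousConstSMul 𝕜 E] {s : Set E}
    (hs : Convex 𝕜 s) : Convex 𝕜 (seqClosure s) := by
  rintro _ ⟨x, hx, hx_lim⟩ _ ⟨y, hy, hy_lim⟩ a b ha hb hab
  exact ⟨fun n => a • x n + b • y n, fun n => hs (hx n) (hy n) ha hb hab,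
    (hx_lim.const_smul a).add (hy_lim.const_smul b)⟩

namespace ZeroAtInftyContinuousMap

section Norm

variable {α β : Type*} [TopologicalSpace α] [NormedAddCommGroup β]

theorem norm_apply_le (g : C₀(α, β)) (x : α) : ‖g x‖ ≤ ‖g‖ :=
  g.toBCF.norm_coe_le_norm x

theorem norm_le_of_forall_norm_apply_le {g : C₀(α, β)} {C : ℝ} (hC : 0 ≤ C)
    (h : ∀ x, ‖g x‖ ≤ C) : ‖g‖ ≤ C :=
  (BoundedContinuousFunction.norm_le hC).mpr h

end Norm

variable {ι β : Type*} [TopologicalSpace ι] [DiscreteTopology ι]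

def ofTendstoCofinite [TopologicalSpace β] [Zero β] (g : ι → β)
    (hg : Tendsto g cofinite (𝓝 0)) : C₀(ι, β) where
  toFun := g
  continuous_toFun := continuous_of_discreteTopology
  zero_at_infty' := by rwa [cocompact_eq_cofinite]

variable [DecidableEq ι]

def single [TopologicalSpace β] [Zero β] (i : ι) (b : β) : C₀(ι, β) :=
  ofTendstoCofinite (Pi.single i b) <| tendsto_nhds_of_eventually_eq <|
    eventually_cofinite.mpr <| (Set.finite_singleton i).subset Pi.support_single_subset

theorem single_apply [TopologicalSpace β] [Zero β] (i : ι) (b : β) (j : ι) :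
    single i b j = (Pi.single i b : ι → β) j :=
  rfl

variable [NormedAddCommGroup β]

theorem sum_single_apply (t : Finset ι) (c : ι → β) (j : ι) :
    (∑ i ∈ t, single i (c i)) j = if j ∈ t then c j else 0 := by
  rw [← Finset.sum_pi_single]
  exact map_sum (⟨⟨fun g : C₀(ι, β) => g j, rfl⟩, fun _ _ => rfl⟩ : C₀(ι, β) →+ β) _ t

theorem hasSum_single (g : C₀(ι, β)) : HasSum (fun i => single i (g i)) g := by
  refine Metric.tendsto_atTop.mpr fun ε hε => ?_
  have hfin : {i | ε / 2 ≤ ‖g i‖}.Finite := by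
    have := g.zero_at_infty'
    rw [cocompact_eq_cofinite, Metric.tendsto_nhds] at this
    simpa using this (ε / 2) (half_pos hε)
  refine ⟨hfin.toFinset, fun t ht => ?_⟩
  rw [dist_eq_norm]
  refine (norm_le_of_forall_norm_apply_le (half_pos hε).le fun j => ?_).trans_lt (half_lt_self hε)
  rw [sub_apply, sum_single_apply]
  split_ifs with hj
  · simpa using (half_pos hε).le
  · rw [zero_sub, norm_neg]
    exact (not_le.mp fun h => hj (ht (hfin.mem_toFinset.mpr h))).le

theorem single_eq_smul_single_one (i : ι) (c : ℝ) : single i c = c • single i (1 : ℝ) := by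
  ext j
  simp [single_apply, Pi.single_apply]

theorem summable_abs_apply_single (φ : StrongDual ℝ C₀(ι, ℝ)) :
    Summable fun i => |φ (single i 1)| := by
  refine summable_of_sum_le (fun i => abs_nonneg _) (c := ‖φ‖) fun t => ?_
  set s : ι → ℝ := fun i => SignType.sign (φ (single i 1))
  have hs : ‖∑ i ∈ t, single i (s i)‖ ≤ 1 := by
    refine norm_le_of_forall_norm_apply_le zero_le_one fun j => ?_
    rw [sum_single_apply]
    split_ifs
    · rcases lt_trichotomy (φ (single j 1)) 0 with h | h | h <;> simp [s, h]
    · simp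
  calc ∑ i ∈ t, |φ (single i 1)| = φ (∑ i ∈ t, single i (s i)) := by
        simp [map_sum, single_eq_smul_single_one _ (s _), s]
    _ ≤ ‖φ‖ * ‖∑ i ∈ t, single i (s i)‖ := (le_abs_self _).trans (φ.le_opNorm _)
    _ ≤ ‖φ‖ := mul_le_of_le_one_right (norm_nonneg φ) hs

theorem hasSum_mul_apply_single (φ : StrongDual ℝ C₀(ι, ℝ)) (g : C₀(ι, ℝ)) :
    HasSum (fun i => g i * φ (single i 1)) (φ g) := by
  simpa [single_eq_smul_single_one _ (g _)] using (hasSum_single g).mapL φ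

end ZeroAtInftyContinuousMap

namespace WeakDual

section RCLike

variable {𝕜 X : Type*} [RCLike 𝕜] [NormedAddCommGroup X] [NormedSpace 𝕜 X]

theorem isClosed_inter_closedBall_of_isSeqClosed [TopologicalSpace.SeparableSpace X]
    {K : Set (WeakDual 𝕜 X)} (hK : IsSeqClosed K) (r : ℝ) :
    IsClosed (K ∩ toStrongDual ⁻¹' closedBall 0 r) := by
  set B := toStrongDual ⁻¹' closedBall (0 : StrongDual 𝕜 X) r
  have hB : IsCompact B := isCompact_closedBall 0 r
  have : CompactSpace B := isCompact_iff_compactSpace.mp hB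
  have : TopologicalSpace.MetrizableSpace B := metrizable_of_isCompact 𝕜 X B hB
  have hKB : IsClosed ((↑) ⁻¹' K : Set B) :=
    (hK.preimage continuous_subtype_val.seqContinuous).isClosed
  rw [Set.inter_comm, ← Subtype.image_preimage_coe]
  exact (isClosed_closedBall 0 r).isClosedEmbedding_subtypeVal.isClosedMap _ hKB

theorem polar_closedBall {r : ℝ} (hr : 0 < r) :
    polar 𝕜 (closedBall (0 : X) r) = toStrongDual ⁻¹' closedBall 0 r⁻¹ := by
  rw [polar, NormedSpace.polar_closedBall hr]

theorem exists_finset_disjoint_polar_union {K : Set (WeakDual 𝕜 X)} {r s : ℝ} (hr : 0 < r)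
    (hKs : IsClosed (K ∩ toStrongDual ⁻¹' closedBall 0 s)) {G : Set X}
    (hG : Disjoint (K ∩ toStrongDual ⁻¹' closedBall 0 r) (polar 𝕜 G)) :
    ∃ F : Finset X, ↑F ⊆ closedBall (0 : X) r⁻¹ ∧
      Disjoint (K ∩ toStrongDual ⁻¹' closedBall 0 s) (polar 𝕜 (G ∪ F)) := by
  have hcpt : IsCompact (K ∩ toStrongDual ⁻¹' closedBall 0 s ∩ polar 𝕜 G) :=
    (isCompact_closedBall 0 s).of_isClosed_subset (hKs.inter (isClosed_polar 𝕜 G))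
      (Set.inter_subset_left.trans Set.inter_subset_right)
  -- `polar` of the ball of radius `r⁻¹` is the dual ball of radius `r`, which misses `K ∩ polar G`
  have hempty : K ∩ toStrongDual ⁻¹' closedBall 0 s ∩ polar 𝕜 G ∩
      ⋂ x : closedBall (0 : X) r⁻¹, polar 𝕜 {(x : X)} = ∅ := by
    refine Set.eq_empty_of_forall_notMem fun f ⟨⟨⟨hfK, _⟩, hfG⟩, hf⟩ => ?_
    have hfr : f ∈ polar 𝕜 (closedBall (0 : X) r⁻¹) := fun x hx =>
      Set.mem_iInter.mp hf ⟨x, hx⟩ x rfl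
    rw [polar_closedBall (inv_pos.mpr hr), inv_inv] at hfr
    exact hG.notMem_of_mem_left ⟨hfK, hfr⟩ hfG
  obtain ⟨u, hu⟩ := hcpt.elim_finite_subfamily_closed _ (fun x => isClosed_polar 𝕜 _) hempty
  refine ⟨u.map (Function.Embedding.subtype _), by simp, ?_⟩
  rw [Set.disjoint_iff_inter_eq_empty, ← hu]
  ext f
  simp [polar_def, or_imp, forall_and, and_assoc]

theorem exists_tendsto_cofinite_disjoint_polar {K : Set (WeakDual 𝕜 X)}
    (hK : ∀ r, IsClosed (K ∩ toStrongDual ⁻¹' closedBall 0 r)) {δ : ℝ} (hδ : 0 < δ)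
    (hKδ : Disjoint K (toStrongDual ⁻¹' closedBall 0 δ)) :
    ∃ U : Set X, Tendsto ((↑) : U → X) cofinite (𝓝 0) ∧ Disjoint K (polar 𝕜 U) := by
  have step (n : ℕ) (G : Set X)
      (hG : Disjoint (K ∩ toStrongDual ⁻¹' closedBall 0 (δ + n)) (polar 𝕜 G)) :
      ∃ F : Finset X, ↑F ⊆ closedBall (0 : X) (δ + n)⁻¹ ∧
        Disjoint (K ∩ toStrongDual ⁻¹' closedBall 0 (δ + (n + 1 : ℕ))) (polar 𝕜 (G ∪ F)) :=
    exists_finset_disjoint_polar_union (by positivity) (hK _) hG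
  choose! F hF_small hF_disj using step
  let G (n : ℕ) : Set X := Nat.rec ∅ (fun k Gk => Gk ∪ F k Gk) n
  have hG (n : ℕ) : Disjoint (K ∩ toStrongDual ⁻¹' closedBall 0 (δ + n)) (polar 𝕜 (G n)) := by
    induction n with
    | zero => simpa [G, polar_def, ← Set.disjoint_iff_inter_eq_empty] using hKδ
    | succ n ih => exact hF_disj n _ ih
  set U := ⋃ n, (F n (G n) : Set X)
  have hGU (n : ℕ) : G n ⊆ U := by
    induction n with
    | zero => exact Set.empty_subset _
    | succ n ih => exact Set.union_subset ih (Set.subset_iUnion (fun n => (F n (G n) : Set X)) n)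
  refine ⟨U, ?_, ?_⟩
  · refine Metric.tendsto_nhds.mpr fun ε hε => eventually_cofinite.mpr ?_
    obtain ⟨N, hN⟩ := exists_nat_gt ε⁻¹
    refine ((Set.finite_lt_nat N).biUnion fun n _ => (F n (G n)).finite_toSet).preimage
      Subtype.val_injective.injOn |>.subset fun ⟨x, hxU⟩ hx => ?_
    obtain ⟨m, hm⟩ := Set.mem_iUnion.mp hxU
    refine Set.mem_iUnion₂.mpr ⟨m, ?_, hm⟩
    by_contra hmN
    have hNm : N ≤ m := not_lt.mp hmN
    have hsmall : ‖x‖ ≤ (δ + m)⁻¹ := mem_closedBall_zero_iff.mp (hF_small m _ (hG m) hm)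
    have : (δ + m)⁻¹ < ε := (inv_lt_comm₀ hε (by positivity)).mp <| by
      linarith [(Nat.cast_le.mpr hNm : (N : ℝ) ≤ m)]
    simp only [Set.mem_ofPred_eq, dist_zero_right, not_lt] at hx
    linarith
  · refine Set.disjoint_left.mpr fun f hfK hfU => ?_
    obtain ⟨n, hn⟩ := exists_nat_ge (‖toStrongDual f‖ - δ)
    refine (hG n).notMem_of_mem_left ⟨hfK, ?_⟩ fun x hx => hfU x (hGU n hx)
    rw [Set.mem_preimage, mem_closedBall_zero_iff]
    linarith

theorem isClosed_preimage_add_inter_closedBall {K : Set (WeakDual 𝕜 X)}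
    (hK : ∀ r, IsClosed (K ∩ toStrongDual ⁻¹' closedBall 0 r)) (f₀ : WeakDual 𝕜 X) (r : ℝ) :
    IsClosed ((f₀ + ·) ⁻¹' K ∩ toStrongDual ⁻¹' closedBall 0 r) := by
  have : (f₀ + ·) ⁻¹' K ∩ toStrongDual ⁻¹' closedBall 0 r =
      (f₀ + ·) ⁻¹' (K ∩ toStrongDual ⁻¹' closedBall 0 (‖toStrongDual f₀‖ + r)) ∩
        toStrongDual ⁻¹' closedBall 0 r := by
    ext g
    simp only [Set.mem_inter_iff, Set.mem_preimage, mem_closedBall_zero_iff, map_add]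
    refine ⟨fun ⟨hgK, hg⟩ => ⟨⟨hgK, ?_⟩, hg⟩, fun ⟨⟨hgK, _⟩, hg⟩ => ⟨hgK, hg⟩⟩
    exact (norm_add_le _ _).trans (by gcongr)
  rw [this]
  exact ((hK _).preimage (continuous_const_add f₀)).inter (isClosed_closedBall 0 r)

theorem exists_pos_disjoint_closedBall {K : Set (WeakDual 𝕜 X)}
    (hK : IsClosed (K ∩ toStrongDual ⁻¹' closedBall 0 1)) (h0 : 0 ∉ K) :
    ∃ δ > 0, Disjoint K (toStrongDual ⁻¹' closedBall 0 δ) := by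
  -- weak* closed sets are norm closed
  have hnhds : StrongDual.toWeakDual ⁻¹' (K ∩ toStrongDual ⁻¹' closedBall 0 1)ᶜ ∈
      𝓝 (0 : StrongDual 𝕜 X) :=
    (hK.isOpen_compl.preimage NormedSpace.Dual.toWeakDual_continuous).mem_nhds
      fun h => h0 (by simpa using h.1)
  obtain ⟨ε, hε, hball⟩ := nhds_basis_closedBall.mem_iff.mp hnhds
  refine ⟨min ε 1, lt_min hε one_pos, Set.disjoint_left.mpr fun f hfK hf => ?_⟩
  rw [Set.mem_preimage, mem_closedBall_zero_iff, le_min_iff] at hf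
  exact hball (mem_closedBall_zero_iff.mpr hf.1)
    ⟨hfK, mem_closedBall_zero_iff.mpr hf.2⟩

end RCLike

section Real

variable {X : Type*} [NormedAddCommGroup X] [NormedSpace ℝ X]

theorem exists_pos_le_apply_of_disjoint_polar [CompleteSpace X] {U : Set X}
    (hU : Tendsto ((↑) : U → X) cofinite (𝓝 0)) {K : Set (WeakDual ℝ X)} (hconv : Convex ℝ K)
    (hKU : Disjoint K (polar ℝ U)) : ∃ x₀ : X, ∃ u > 0, ∀ f ∈ K, u ≤ f x₀ := by
  classical
  let : TopologicalSpace U := ⊥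
  have : DiscreteTopology U := ⟨rfl⟩
  let T : WeakDual ℝ X →ₗ[ℝ] C₀(U, ℝ) :=
    { toFun := fun f => ofTendstoCofinite (fun x => f x) <| by
        simpa [Function.comp_def] using ((toStrongDual f).continuous.tendsto 0).comp hU
      map_add' := fun _ _ => rfl
      map_smul' := fun _ _ => rfl }
  have hTK : Disjoint (ball 0 1) (T '' K) := by
    refine Set.disjoint_right.mpr ?_
    rintro _ ⟨f, hf, rfl⟩ hball
    have : f ∉ polar ℝ U := hKU.notMem_of_mem_left hf
    simp only [polar_def, Set.mem_ofPred_eq, not_forall, not_le] at this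
    obtain ⟨x, hx, hfx⟩ := this
    have hTf : ‖f x‖ ≤ ‖T f‖ := norm_apply_le (T f) ⟨x, hx⟩
    rw [mem_ball_zero_iff] at hball
    linarith
  obtain ⟨φ, u, hφ_ball, hφ_K⟩ :=
    geometric_hahn_banach_open (convex_ball 0 1) isOpen_ball (hconv.linear_image T) hTK
  have hu : 0 < u := by simpa using hφ_ball 0 (mem_ball_self one_pos)
  have hsum : Summable fun i : U => φ (single i 1) • (i : X) := by
    refine (summable_abs_apply_single φ).of_norm_bounded_eventually ?_
    filter_upwards [hU.eventually (closedBall_mem_nhds 0 one_pos)] with i hi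
    rw [norm_smul, Real.norm_eq_abs]
    exact mul_le_of_le_one_right (abs_nonneg _) (mem_closedBall_zero_iff.mp hi)
  refine ⟨∑' i : U, φ (single i 1) • (i : X), u, hu, fun f hf => ?_⟩
  have hf_sum : HasSum (fun i : U => f i * φ (single i 1))
      (f (∑' i : U, φ (single i 1) • (i : X))) := by
    simpa [mul_comm] using hsum.hasSum.mapL (toStrongDual f)
  rw [hf_sum.unique (hasSum_mul_apply_single φ (T f))]
  exact hφ_K _ ⟨f, hf, rfl⟩

theorem isClosed_of_convex_of_forall_isClosed_inter_closedBall [CompleteSpace X]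
    {K : Set (WeakDual ℝ X)} (hconv : Convex ℝ K)
    (hK : ∀ r, IsClosed (K ∩ toStrongDual ⁻¹' closedBall 0 r)) : IsClosed K := by
  refine closure_subset_iff_isClosed.mp fun f₀ hf₀ => by_contra fun hf₀K => ?_
  have hK' := isClosed_preimage_add_inter_closedBall hK f₀
  obtain ⟨δ, hδ, hK'δ⟩ := exists_pos_disjoint_closedBall (hK' 1) (by simpa using hf₀K)
  obtain ⟨U, hU, hK'U⟩ := exists_tendsto_cofinite_disjoint_polar hK' hδ hK'δ
  obtain ⟨x₀, u, hu, hux₀⟩ :=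
    exists_pos_le_apply_of_disjoint_polar hU (hconv.translate_preimage_right f₀) hK'U
  have h0 : (0 : WeakDual ℝ X) ∈ closure (Homeomorph.addLeft f₀ ⁻¹' K) := by
    rw [← Homeomorph.preimage_closure]
    simpa using hf₀
  obtain ⟨g, hg, hgK'⟩ := mem_closure_iff_nhds.mp h0 {g | g x₀ < u}
    ((isOpen_lt (eval_continuous x₀) continuous_const).mem_nhds hu)
  exact (hux₀ g hgK').not_gt hg

theorem isClosed_of_convex_of_isSeqClosed [CompleteSpace X] [TopologicalSpace.SeparableSpace X]
    {K : Set (WeakDual ℝ X)} (hconv : Convex ℝ K) (hK : IsSeqClosed K) : IsClosed K :=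
  isClosed_of_convex_of_forall_isClosed_inter_closedBall hconv
    (isClosed_inter_closedBall_of_isSeqClosed hK)

end Real

end WeakDual

/-- in the dual of a separable Banach space, a convex set is weak* closed
iff it is weak* sequentially closed; consequently, the weak* sequential closure `S` of a
convex set `C` equals the weak* closure of `C` iff `S` is weak* sequentially closed. -/
theorem stmt16 (X : Type*) [NormedAddCommGroup X] [NormedSpace ℝ X]
    [CompleteSpace X] [TopologicalSpace.SeparableSpace X] :
    (∀ K : Set (WeakDual ℝ X), Convex ℝ K → (IsClosed K ↔ IsSeqClosed K)) ∧
    (∀ C : Set (WeakDual ℝ X), Convex ℝ C →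
      (seqClosure C = closure C ↔ IsSeqClosed (seqClosure C))) := by
  have closed_iff (K : Set (WeakDual ℝ X)) (hK : Convex ℝ K) : IsClosed K ↔ IsSeqClosed K :=
    ⟨IsClosed.isSeqClosed, isClosed_of_convex_of_isSeqClosed hK⟩
  refine ⟨closed_iff, fun C hC => ⟨fun h => h ▸ isClosed_closure.isSeqClosed, fun h => ?_⟩⟩
  exact seqClosure_subset_closure.antisymm
    (closure_minimal subset_seqClosure ((closed_iff _ hC.seqClosure).mpr h))
end
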